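/- Let n ≥ 3 and λ = (λ₁,...,λₙ) ∈ Γ₂ with λ₁ ≥ ... ≥ λₙ. Suppose a > 0 satisfies a ≤ √(σ₂(λ)/(3(n−1)(n−2))), σ₃(λ + a·𝟙) ≥ 0, and λ₁ > 6(n−2)a. Then for every j ∈ {2,...,n}, |λⱼ| ≤ (n−1)²a + 7(n−1)σ₂(λ)/(5λ₁). -/
import Mathlib

open Finset

noncomputable def s1 {n : ℕ} (x : Fin n → ℝ) : ℝ := ∑ i, x i

noncomputable def s2 {n : ℕ} (x : Fin n → ℝ) : ℝ :=
  ((∑ i, x i) ^ 2 - ∑ i, (x i) ^ 2) / 2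

noncomputable def s3 {n : ℕ} (x : Fin n → ℝ) : ℝ :=
  ((∑ i, x i) ^ 3 - 3 * (∑ i, x i) * (∑ i, (x i) ^ 2) + 2 * ∑ i, (x i) ^ 3) / 6

def Gamma2 {n : ℕ} : Set (Fin n → ℝ) := {x | 0 < s1 x ∧ 0 < s2 x}

def Gamma3 {n : ℕ} : Set (Fin n → ℝ) := {x | 0 < s1 x ∧ 0 < s2 x ∧ 0 < s3 x}

set_option maxHeartbeats 8000000 in
theorem stmt_4 (n : ℕ) (hn : 3 ≤ n) (l : Fin n → ℝ)
    (hsort : ∀ i j : Fin n, i ≤ j → l j ≤ l i) (hG : l ∈ Gamma2)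
    (a : ℝ) (ha : 0 < a)
    (ha' : a ≤ Real.sqrt (s2 l / (3 * ((n : ℝ) - 1) * ((n : ℝ) - 2))))
    (hs3 : 0 ≤ s3 (fun i => l i + a))
    (hlarge : 6 * ((n : ℝ) - 2) * a < l ⟨0, by omega⟩) :
    ∀ j : Fin n, j ≠ ⟨0, by omega⟩ →
      |l j| ≤ ((n : ℝ) - 1) ^ 2 * a + 7 * ((n : ℝ) - 1) * s2 l / (5 * l ⟨0, by omega⟩) := by
  obtain ⟨hs1l, hs2l⟩ := hG
  intro j hj
  have hn3 : (3:ℝ) ≤ (n:ℝ) := by exact_mod_cast hn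
  have hzlt : 0 < n := by omega
  have holt : 1 < n := by omega
  set z : Fin n := ⟨0, hzlt⟩ with hzdef
  set o : Fin n := ⟨1, holt⟩ with hodef
  have hj' : j ≠ z := hj
  have hlarge' : 6*((n:ℝ)-2)*a < l z := hlarge
  show |l j| ≤ ((n:ℝ)-1)^2*a + 7*((n:ℝ)-1)* s2 l / (5 * l z)
  set μ : Fin n → ℝ := fun i => l i + a with hmu
  have hP1pos : 0 < ∑ i, l i := hs1l
  have hAeq : s2 l = ((∑ i, l i)^2 - ∑ i, (l i)^2)/2 := rfl
  have eq1 : ∑ i, μ i = (∑ i, l i) + (n:ℝ)*a := by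
    simp only [hmu]
    rw [Finset.sum_add_distrib, Finset.sum_const, Finset.card_univ, Fintype.card_fin,
      nsmul_eq_mul]
  have eq2 : ∑ i, μ i ^ 2 = (∑ i, (l i)^2) + 2*a*(∑ i, l i) + (n:ℝ)*a^2 := by
    simp only [hmu]
    have h : ∀ i ∈ Finset.univ (α := Fin n), (l i + a)^2 = (l i)^2 + 2*a*(l i) + a^2 :=
      fun i _ => by ring
    rw [Finset.sum_congr rfl h, Finset.sum_add_distrib, Finset.sum_add_distrib,
      ← Finset.mul_sum, Finset.sum_const, Finset.card_univ, Fintype.card_fin, nsmul_eq_mul]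
  -- tail sums
  set Se1 := ∑ i ∈ Finset.univ.erase z, μ i with hSe1def
  set Se2 := ∑ i ∈ Finset.univ.erase z, μ i ^ 2 with hSe2def
  set Se3 := ∑ i ∈ Finset.univ.erase z, μ i ^ 3 with hSe3def
  have f1 : Se1 + μ z = ∑ i, μ i := Finset.sum_erase_add _ _ (Finset.mem_univ z)
  have f2 : Se2 + μ z ^ 2 = ∑ i, μ i ^ 2 :=
    Finset.sum_erase_add _ (fun i => μ i ^ 2) (Finset.mem_univ z)
  have f3 : Se3 + μ z ^ 3 = ∑ i, μ i ^ 3 :=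
    Finset.sum_erase_add _ (fun i => μ i ^ 3) (Finset.mem_univ z)
  have hq2nn : 0 ≤ Se2 := Finset.sum_nonneg fun i _ => sq_nonneg _
  have hjmem : j ∈ Finset.univ.erase z := Finset.mem_erase.mpr ⟨hj', Finset.mem_univ _⟩
  have homem : o ∈ Finset.univ.erase z :=
    Finset.mem_erase.mpr ⟨by simp [hodef, hzdef, Fin.ext_iff], Finset.mem_univ _⟩
  have hjq : μ j ^ 2 ≤ Se2 := Finset.single_le_sum (fun i _ => sq_nonneg (μ i)) hjmem
  have hoq : μ o ^ 2 ≤ Se2 := Finset.single_le_sum (fun i _ => sq_nonneg (μ i)) homem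
  set t := max (μ o) 0 with htdef
  have ht0 : 0 ≤ t := le_max_right _ _
  have htail : ∀ i ∈ Finset.univ.erase z, μ i ≤ t := by
    intro i hi
    have hiz : i ≠ z := (Finset.mem_erase.mp hi).1
    have h1 : o ≤ i := by
      rw [Fin.le_def]
      have h2 : (i : ℕ) ≠ 0 := fun h => hiz (Fin.ext h)
      simp only [hodef]
      omega
    have h3 : μ i ≤ μ o := by simp only [hmu]; linarith [hsort o i h1]
    exact le_trans h3 (le_max_left _ _)
  have hq3t : Se3 ≤ t * Se2 := by
    rw [hSe2def, hSe3def, Finset.mul_sum]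
    apply Finset.sum_le_sum
    intro i hi
    have h1 : μ i ≤ t := htail i hi
    nlinarith [sq_nonneg (μ i), mul_nonneg (sq_nonneg (μ i)) (sub_nonneg.mpr h1)]
  have ht2 : t ^ 2 ≤ μ o ^ 2 := by
    rcases le_total (μ o) 0 with h | h
    · rw [htdef, max_eq_right h]; nlinarith [sq_nonneg (μ o)]
    · rw [htdef, max_eq_left h]
  have h6 : s3 μ = ((∑ i, μ i)^3 - 3*(∑ i, μ i)*(∑ i, μ i ^2) + 2*∑ i, μ i ^3)/6 := rfl
  rw [h6, ← f1, ← f2, ← f3] at hs3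
  have hczeq0 : μ z = l z + a := rfl
  have hmjeq0 : l j = μ j - a := by simp [hmu]
  -- scalarize
  set lam := l z with hlamdef
  set A := s2 l with hAdef
  set P1 := ∑ i, l i with hP1def
  set P2 := ∑ i, (l i)^2 with hP2def
  set cz := μ z with hczdef
  set mj := μ j with hmjdef
  set mo := μ o with hmodef
  have g1 : Se1 + cz = P1 + (n:ℝ)*a := by rw [f1, eq1]
  have g2 : Se2 + cz^2 = P2 + 2*a*P1 + (n:ℝ)*a^2 := by rw [f2, eq2]
  clear_value Se1 Se2 Se3 t lam A P1 P2 cz mj mo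
  clear f1 f2 f3 eq1 eq2 hlarge hj hsort hs1l htail hjmem homem h6 hmu
  clear hSe1def hSe2def hSe3def htdef hlamdef hAdef hP1def hP2def hczdef hmjdef hmodef
  -- pure scalar arithmetic from here
  have h2A : P2 = P1^2 - 2*A := by rw [hAeq]; ring
  have hA : 0 < A := hs2l
  have hlampos : 0 < lam := by
    have := mul_pos (by linarith : (0:ℝ) < 6*((n:ℝ)-2)) ha
    linarith [hlarge']
  have hc : 0 < cz := by rw [hczeq0]; linarith
  have hcB : 0 < Se1 + cz := by
    rw [g1]
    have := mul_pos (by linarith : (0:ℝ) < (n:ℝ)) ha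
    linarith [hP1pos]
  have hq2lt : Se2 < Se1 ^ 2 + 2 * cz * Se1 := by
    have key : Se1^2 + 2*cz*Se1 - Se2 = 2*A + 2*((n:ℝ)-1)*(a*P1) + (n:ℝ)*((n:ℝ)-1)*a^2 := by
      have e1 : Se1 = P1 + (n:ℝ)*a - cz := by linarith [g1]
      have e2 : Se2 = P2 + 2*a*P1 + (n:ℝ)*a^2 - cz^2 := by linarith [g2]
      rw [e1, e2, h2A]; ring
    linarith [key, hA,
      mul_nonneg (by linarith : (0:ℝ) ≤ (n:ℝ)-1) (le_of_lt (mul_pos ha hP1pos)),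
      mul_nonneg (mul_nonneg (by linarith : (0:ℝ) ≤ (n:ℝ)) (by linarith : (0:ℝ) ≤ (n:ℝ)-1))
        (sq_nonneg a)]
  have hBpos : 0 < Se1 := by
    by_contra hB
    push_neg at hB
    linarith [mul_nonneg (neg_nonneg.mpr hB) (by linarith : (0:ℝ) ≤ Se1 + 2 * cz), hq2nn, hq2lt]
  have hS3 : 0 ≤ (Se1 + cz)^3 - 3*(Se1 + cz)*(Se2 + cz^2) + 2*(Se3 + cz^3) := by
    linarith [hs3]
  -- key step: tail sigma-2 nonnegative
  have hq2B : Se2 ≤ Se1 ^ 2 := by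
    by_contra hcon
    push_neg at hcon
    set u := Real.sqrt Se2 with hu
    have hu2 : u ^ 2 = Se2 := Real.sq_sqrt hq2nn
    have hu0 : 0 ≤ u := Real.sqrt_nonneg _
    clear_value u
    clear hu
    have htu : t ≤ u := by nlinarith [ht2, hoq, hu2, ht0, hu0]
    have huB : Se1 < u := by nlinarith [hcon, hu2, hBpos, hu0]
    have hucB : u < Se1 + cz := by
      by_contra hcon2
      push_neg at hcon2
      have h1 : (Se1 + cz)^2 ≤ u^2 := by nlinarith [hcB]
      linarith [h1, hq2lt, hu2, sq_nonneg cz]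
    have hq3u : Se3 ≤ u ^ 3 := by
      calc Se3 ≤ t * Se2 := hq3t
        _ ≤ u * Se2 := mul_le_mul_of_nonneg_right htu hq2nn
        _ = u ^ 3 := by rw [← hu2]; ring
    have hx : 0 < u - Se1 := by linarith
    have hy : 0 < Se1 + cz - u := by linarith
    have hEkey : (Se1 + cz)^3 - 3*(Se1 + cz)*(u^2 + cz^2) + 2*(u^3 + cz^3)
        = -((u - Se1) * (3*Se1*(u - Se1) + 6*Se1*(Se1 + cz - u) + (u - Se1)^2
          + 3*(u - Se1)*(Se1 + cz - u))) := by ring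
    have hinner : 0 < 3*Se1*(u - Se1) + 6*Se1*(Se1 + cz - u) + (u - Se1)^2
        + 3*(u - Se1)*(Se1 + cz - u) := by
      linarith [mul_pos hBpos hx, mul_pos hBpos hy, mul_pos hx hy, sq_nonneg (u - Se1)]
    have hneg : (Se1 + cz)^3 - 3*(Se1 + cz)*(u^2 + cz^2) + 2*(u^3 + cz^3) < 0 := by
      rw [hEkey]
      linarith [mul_pos hx hinner]
    rw [← hu2] at hS3
    linarith [hS3, hq3u, hneg]
  -- bound |l j|
  have hjB : |l j| ≤ Se1 + a := by
    have h1 : mj ^ 2 ≤ Se1 ^ 2 := le_trans hjq hq2B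
    have h2l : -Se1 ≤ mj := by nlinarith [sq_nonneg (mj + Se1)]
    have h2r : mj ≤ Se1 := by nlinarith [sq_nonneg (mj - Se1)]
    rw [abs_le, hmjeq0]
    constructor <;> linarith
  -- endgame arithmetic
  have hSe1v : Se1 = (P1 - lam) + ((n:ℝ)-1)*a := by rw [hczeq0] at g1; linarith
  have hSe2v : Se2 = P1^2 - 2*A + 2*a*P1 + (n:ℝ)*a^2 - (lam + a)^2 := by
    rw [hczeq0] at g2; rw [h2A] at g2; linarith
  have hmain : 2*lam*(P1 - lam) ≤ 2*A + 2*((n:ℝ)-2)*a*(P1 - lam) + ((n:ℝ)-1)*((n:ℝ)-2)*a^2 := by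
    have h := hq2B
    rw [hSe2v, hSe1v] at h
    nlinarith [h]
  have hKpos : 0 < 3*((n:ℝ)-1)*((n:ℝ)-2) := by nlinarith
  have hXnn : 0 ≤ A / (3*((n:ℝ)-1)*((n:ℝ)-2)) := div_nonneg (le_of_lt hA) (le_of_lt hKpos)
  have ha2 : 3*((n:ℝ)-1)*((n:ℝ)-2)*a^2 ≤ A := by
    have h1 : a^2 ≤ Real.sqrt (A / (3*((n:ℝ)-1)*((n:ℝ)-2))) ^ 2 :=
      pow_le_pow_left₀ (le_of_lt ha) ha' 2
    rw [Real.sq_sqrt hXnn] at h1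
    rw [le_div_iff₀ hKpos] at h1
    linarith
  have h5 : 5 * (lam * (P1 - lam)) ≤ 7 * A := by
    rcases le_or_gt 0 (P1 - lam) with hs | hs
    · have h4 : 0 ≤ (P1 - lam) * (lam - 6*((n:ℝ)-2)*a) := mul_nonneg hs (by linarith)
      linarith [hmain, ha2, h4]
    · linarith [mul_pos hlampos (neg_pos.mpr hs), hA]
  have hng : (0:ℝ) ≤ ((n:ℝ)-1)^2 - (n:ℝ) := by nlinarith [sq_nonneg ((n:ℝ)-3)]
  have hna : (n:ℝ)*a ≤ ((n:ℝ)-1)^2*a := by nlinarith [mul_nonneg (le_of_lt ha) hng]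
  have hSdiv : P1 - lam ≤ 7*((n:ℝ)-1)*A/(5*lam) := by
    rw [le_div_iff₀ (by positivity : (0:ℝ) < 5*lam)]
    linarith [h5, mul_nonneg (by linarith : (0:ℝ) ≤ (n:ℝ)-2) (le_of_lt hA)]
  linarith [hjB, hSe1v, hSdiv, hna]
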